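/- Let n be a positive integer. Then F(x) = x^7 on F_{3^n} is second-order zero differential 3-uniform, i.e. max{∇_F(a,b) : a, b ∈ F_{3^n}\{0}} = 3. -/

import Mathlib

/-!
In characteristic 3 we have `(x + a)^7 = (x³ + a³)²(x + a)`, and the second difference of
`x ↦ x^7` collapses to the cubic `2ab(a² + b²) x³ + 2a³b³ x + ab(a + b)(a - b)⁴`. Its linear
coefficient `2a³b³` does not vanish for `a, b ≠ 0`, so it has at most three roots; for `a = b = 1`
it is `x³ - x`, whose roots `0, 1, -1` give exactly three solutions.
-/

open Polynomial Finset

def secondDiff {R : Type*} [Ring R] (f : R → R) (a b x : R) : R :=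
  f (x + a + b) - f (x + b) - f (x + a) + f x

theorem card_filter_eval_eq_zero_le_natDegree {R : Type*} [CommRing R] [IsDomain R] [Fintype R]
    [DecidableEq R] {p : R[X]} (hp : p ≠ 0) : #{x | p.eval x = 0} ≤ p.natDegree :=
  card_le_degree_of_subset_roots fun x hx => by
    simpa [mem_roots hp] using (mem_filter.mp hx).2

section CharThree

variable {R : Type*} [CommRing R]

noncomputable def secondDiffPowSevenPoly (a b : R) : R[X] :=
  C (2 * a * b * (a ^ 2 + b ^ 2)) * X ^ 3 + C (2 * a ^ 3 * b ^ 3) * X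
    + C (a * b * (a + b) * (a - b) ^ 4)

theorem natDegree_secondDiffPowSevenPoly_le (a b : R) :
    (secondDiffPowSevenPoly a b).natDegree ≤ 3 := by
  unfold secondDiffPowSevenPoly
  compute_degree

variable [CharP R 3]

theorem eval_secondDiffPowSevenPoly (a b x : R) :
    (secondDiffPowSevenPoly a b).eval x = secondDiff (· ^ 7) a b x := by
  simp only [secondDiffPowSevenPoly, secondDiff, eval_add, eval_mul, eval_C, eval_pow, eval_X]
  rw [← sub_eq_zero]
  ring_nf
  reduce_mod_char!

theorem secondDiffPowSevenPoly_ne_zero [IsDomain R] {a b : R} (ha : a ≠ 0) (hb : b ≠ 0) :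
    secondDiffPowSevenPoly a b ≠ 0 := by
  have h2 : (2 : R) ≠ 0 := fun h =>
    one_ne_zero (by linear_combination CharP.cast_eq_zero R 3 - h : (1 : R) = 0)
  intro h
  have hcoeff := congrArg (coeff · 1) h
  simp only [secondDiffPowSevenPoly, coeff_add, coeff_C_mul, coeff_X_pow, coeff_X_one, coeff_C,
    coeff_zero] at hcoeff
  norm_num [h2, ha, hb] at hcoeff

theorem secondDiff_pow_seven_one_one (x : R) :
    secondDiff (· ^ 7) 1 1 x = x * (x - 1) * (x + 1) := by
  unfold secondDiff
  rw [← sub_eq_zero]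
  ring_nf
  reduce_mod_char!

variable [IsDomain R] [Fintype R] [DecidableEq R]

theorem card_filter_secondDiff_pow_seven_le_three {a b : R} (ha : a ≠ 0) (hb : b ≠ 0) :
    #{x | secondDiff (· ^ 7) a b x = 0} ≤ 3 := by
  simp only [← eval_secondDiffPowSevenPoly]
  exact (card_filter_eval_eq_zero_le_natDegree (secondDiffPowSevenPoly_ne_zero ha hb)).trans
    (natDegree_secondDiffPowSevenPoly_le a b)

theorem card_filter_secondDiff_pow_seven_one_one :
    #{x : R | secondDiff (· ^ 7) 1 1 x = 0} = 3 := by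
  have : Fact (2 < 3) := ⟨by norm_num⟩
  refine card_eq_three.mpr ⟨0, 1, -1, zero_ne_one, ?_, (CharP.neg_one_ne_one R 3).symm, ?_⟩
  · simp
  · ext x
    simp only [mem_filter, mem_univ, true_and, secondDiff_pow_seven_one_one, mul_eq_zero,
      sub_eq_zero, add_eq_zero_iff_eq_neg, mem_insert, mem_singleton, or_assoc]

end CharThree

theorem stmt_19_general (n : ℕ)
    (F : Type) [Field F] [Fintype F] [DecidableEq F]
    (hcard : Fintype.card F = 3 ^ n) :
    IsGreatest {k : ℕ | ∃ a b : F, a ≠ 0 ∧ b ≠ 0 ∧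
      (Finset.univ.filter (fun x : F =>
        (x + a + b) ^ 7 - (x + b) ^ 7 - (x + a) ^ 7 + x ^ 7 = 0)).card = k} 3 := by
  have : CharP F 3 := charP_of_card_eq_prime_pow hcard
  refine ⟨⟨1, 1, one_ne_zero, one_ne_zero, card_filter_secondDiff_pow_seven_one_one⟩, ?_⟩
  rintro k ⟨a, b, ha, hb, rfl⟩
  exact card_filter_secondDiff_pow_seven_le_three ha hb

theorem stmt_19 (n : ℕ) (hn : 0 < n)
    (F : Type) [Field F] [Fintype F] [DecidableEq F]
    (hcard : Fintype.card F = 3 ^ n) :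
    IsGreatest {k : ℕ | ∃ a b : F, a ≠ 0 ∧ b ≠ 0 ∧
      (Finset.univ.filter (fun x : F =>
        (x + a + b) ^ 7 - (x + b) ^ 7 - (x + a) ^ 7 + x ^ 7 = 0)).card = k} 3 :=
  stmt_19_general n F hcard
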